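/- Let α be a sandpile torsor algorithm on plane graphs, and define ᾱ, α⁻¹, ᾱ⁻¹ by ᾱ_{(G,χ̄)}(S,T) = α_{(G,χ)}(S,T), α⁻¹_{(G,χ)}(-S,T) = α_{(G,χ)}(S,T), and ᾱ⁻¹_{(G,χ̄)}(-S,T) = α_{(G,χ)}(S,T), where χ̄ reverses the cyclic order at each vertex. Then each of ᾱ, α⁻¹, ᾱ⁻¹ is again a sandpile torsor algorithm, and all four algorithms α, ᾱ, α⁻¹, ᾱ⁻¹ are pairwise distinct. -/

import Mathlib

open Finset

noncomputable section
open scoped Classical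

/-- A finite multigraph without loops: each edge has an unordered pair of
distinct endpoints. -/
structure Multigraph (V E : Type) where
  ends : E → Sym2 V
  loopless : ∀ e, ¬ (ends e).IsDiag

/-- A ribbon structure: for each vertex, a "next edge" map describing the
cyclic ordering of the edges incident to that vertex. -/
structure RibbonStruct (V E : Type) where
  next : V → E → E

/-- The group of degree-zero divisors on the vertex set `V`. -/
def Div0 (V : Type) [Fintype V] : AddSubgroup (V → ℤ) where
  carrier := {D | ∑ v, D v = 0}
  add_mem' := by
    intro a b ha hb
    simp only [Set.mem_setOf_eq, Pi.add_apply, Finset.sum_add_distrib] at *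
    omega
  zero_mem' := by simp
  neg_mem' := by
    intro a ha
    simp only [Set.mem_setOf_eq, Pi.neg_apply, Finset.sum_neg_distrib] at *
    omega

/-- The divisor `c - s`. -/
def chipDiv {V : Type} [DecidableEq V] (c s : V) : V → ℤ :=
  fun v => (if v = c then 1 else 0) - (if v = s then 1 else 0)

namespace Multigraph

variable {V E : Type} [Fintype V] [Fintype E] [DecidableEq V] [DecidableEq E]

/-- Two vertices are adjacent if they are the two endpoints of some edge. -/
def Adj (G : Multigraph V E) (x y : V) : Prop := ∃ e : E, G.ends e = s(x, y)

/-- A multigraph is connected if any two vertices are joined by a walk. -/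
def Connected (G : Multigraph V E) : Prop := ∀ x y : V, Relation.ReflTransGen G.Adj x y

/-- Adjacency using only edges from the set `T`. -/
def AdjOn (G : Multigraph V E) (T : Finset E) (x y : V) : Prop := ∃ e ∈ T, G.ends e = s(x, y)

/-- Reachability using only edges from the set `T`. -/
def ReachOn (G : Multigraph V E) (T : Finset E) (x y : V) : Prop :=
  Relation.ReflTransGen (G.AdjOn T) x y

/-- A spanning tree: a spanning connected edge set of the correct cardinality. -/
def IsSpanningTree (G : Multigraph V E) (T : Finset E) : Prop :=
  (∀ x y : V, G.ReachOn T x y) ∧ T.card = Fintype.card V - 1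

/-- The degree of a vertex: the number of incident edges. -/
def degree (G : Multigraph V E) (v : V) : ℕ := (univ.filter fun e => v ∈ G.ends e).card

/-- The number of edges of `T` incident to `v`. -/
def treeDegree (G : Multigraph V E) (T : Finset E) (v : V) : ℕ :=
  (T.filter fun e => v ∈ G.ends e).card

/-- A leaf vertex of `T`: incident to exactly one edge of `T`. -/
def IsLeafVertex (G : Multigraph V E) (T : Finset E) (v : V) : Prop := G.treeDegree T v = 1

/-- A leaf edge of `T`: an edge of `T` incident to a leaf vertex. -/
def IsLeafEdge (G : Multigraph V E) (T : Finset E) (e : E) : Prop :=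
  e ∈ T ∧ ∃ v, v ∈ G.ends e ∧ G.IsLeafVertex T v

/-- Adjacency within `T` avoiding the vertex `x`. -/
def AdjOnAvoid (G : Multigraph V E) (T : Finset E) (x : V) (a b : V) : Prop :=
  G.AdjOn T a b ∧ a ≠ x ∧ b ≠ x

/-- "The path in `T` from `a` to `r` passes through `y`": `a` cannot reach `r`
within `T` while avoiding the vertex `y`. -/
def PathThrough (G : Multigraph V E) (T : Finset E) (r a y : V) : Prop :=
  ¬ Relation.ReflTransGen (G.AdjOnAvoid T y) a r

/-- Adjacency in `G` avoiding the vertex `x`. -/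
def AdjAvoid (G : Multigraph V E) (x : V) (a b : V) : Prop := G.Adj a b ∧ a ≠ x ∧ b ≠ x

/-- 2-connected: connected and with no cut vertices. -/
def TwoConnected (G : Multigraph V E) : Prop :=
  G.Connected ∧ ∀ x a b : V, a ≠ x → b ≠ x →
    Relation.ReflTransGen (G.AdjAvoid x) a b

/-- The row of the Laplacian matrix of `G` corresponding to the vertex `v`
(the divisor obtained by "firing" the vertex `v`, negated). -/
def lapRow (G : Multigraph V E) (v : V) : V → ℤ := fun w =>
  if w = v then (G.degree v : ℤ) else -((univ.filter fun e => G.ends e = s(v, w)).card : ℤ)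

/-- The subgroup of divisors generated by the rows of the Laplacian, i.e. the
integer image of the Laplacian. -/
def LapSubgroup (G : Multigraph V E) : AddSubgroup (V → ℤ) :=
  AddSubgroup.closure (Set.range G.lapRow)

/-- Two divisors are firing equivalent when their difference lies in the
integer image of the Laplacian. -/
def FiringEquiv (G : Multigraph V E) (D D' : V → ℤ) : Prop := D - D' ∈ G.LapSubgroup

/-- The sandpile group (Picard group) `Pic⁰(G)`:
degree-zero divisors modulo the image of the Laplacian. -/
def Pic0 (G : Multigraph V E) : Type :=
  Div0 V ⧸ ((G.LapSubgroup).addSubgroupOf (Div0 V))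

instance (G : Multigraph V E) : AddCommGroup G.Pic0 :=
  QuotientAddGroup.Quotient.addCommGroup _

/-- The class in `Pic⁰(G)` of a degree-zero divisor. -/
def picClass (G : Multigraph V E) (D : V → ℤ) (hD : D ∈ Div0 V) : G.Pic0 :=
  QuotientAddGroup.mk ⟨D, hD⟩

/-- `cfg` is the rotor configuration of the tree `T` with sink `s` (each
non-sink vertex carries the first edge of `T` on its path to `s`). -/
def IsRotorCfg (G : Multigraph V E) (s : V) (T : Finset E) (cfg : V → E) : Prop :=
  ∀ v, v ≠ s → cfg v ∈ T ∧ v ∈ G.ends (cfg v) ∧ ¬ G.ReachOn (T.erase (cfg v)) v s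

/-- One step along the rotors of `cfg` (with sink `s`):
from `a ≠ s` across the rotor at `a` to its other endpoint `b`. -/
def RotorStep (G : Multigraph V E) (s : V) (cfg : V → E) (a b : V) : Prop :=
  a ≠ s ∧ G.ends (cfg a) = s(a, b)

/-- A rotor configuration is acyclic: following rotors never returns to a
starting vertex. -/
def RotorAcyclic (G : Multigraph V E) (s : V) (cfg : V → E) : Prop :=
  ∀ a : V, ¬ Relation.TransGen (G.RotorStep s cfg) a a

/-- One step of the single-chip rotor-routing process: the state is a pair
(rotor configuration, chip position); the rotor at the chip's position is
rotated one step in the cyclic order `χ`, and the chip then moves across the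
new rotor. -/
def RRStep (G : Multigraph V E) (χ : RibbonStruct V E) (p q : (V → E) × V) : Prop :=
  q.1 = Function.update p.1 p.2 (χ.next p.2 (p.1 p.2)) ∧ G.ends (q.1 p.2) = s(p.2, q.2)

/-- A run of length `n` of the rotor-routing algorithm with sink `s`. -/
def IsRun (G : Multigraph V E) (χ : RibbonStruct V E) (s : V)
    (σ : ℕ → (V → E) × V) (n : ℕ) : Prop :=
  ∀ i, i < n → (σ i).2 ≠ s ∧ G.RRStep χ (σ i) (σ i.succ)

/-- At step `i` of the run `σ`, the chip crosses the edge `e` from `u` to `w`. -/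
def Crosses (G : Multigraph V E) (σ : ℕ → (V → E) × V) (i : ℕ) (e : E) (u w : V) : Prop :=
  (σ i).2 = u ∧ (σ (i + 1)).2 = w ∧ (σ (i + 1)).1 u = e ∧ G.ends e = s(u, w)

/-- A dart of `G`: an edge together with a chosen head. -/
def Dart (G : Multigraph V E) : Type := {p : E × V // p.2 ∈ G.ends p.1}

/-- The "next dart along a face" relation determined by the ribbon structure. -/
def FaceRel (G : Multigraph V E) (χ : RibbonStruct V E) (a b : G.Dart) : Prop :=
  b.1.1 = χ.next a.1.2 a.1.1 ∧ G.ends b.1.1 = s(a.1.2, b.1.2)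

/-- The number of faces of the ribbon graph `(G, χ)`: the number of orbits of
the face map on darts. -/
def numFaces (G : Multigraph V E) (χ : RibbonStruct V E) : ℕ :=
  Nat.card (Quot (G.FaceRel χ))

end Multigraph

/-- The axioms making `χ` an honest ribbon structure on `G`: at each vertex,
`next` is a bijection preserving the incident edges and acting transitively
(i.e. cyclically) on them. -/
def RibbonStruct.IsRibbon {V E : Type} [Fintype V] [Fintype E]
    (χ : RibbonStruct V E) (G : Multigraph V E) : Prop :=
  (∀ v : V, Function.Bijective (χ.next v)) ∧
  (∀ v e, v ∈ G.ends e → v ∈ G.ends (χ.next v e)) ∧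
  (∀ v e f, v ∈ G.ends e → v ∈ G.ends f → ∃ m : ℕ, (χ.next v)^[m] e = f)

/-- A plane graph: a connected ribbon graph of genus 0 (Euler's formula). -/
def Multigraph.IsPlane {V E : Type} [Fintype V] [Fintype E] [DecidableEq V] [DecidableEq E]
    (G : Multigraph V E) (χ : RibbonStruct V E) : Prop :=
  G.Connected ∧ χ.IsRibbon G ∧
    Fintype.card V + G.numFaces χ = Fintype.card E + 2

/-- An isomorphism of ribbon graphs: a pair of bijections on vertices and
edges preserving incidence and the cyclic orderings. -/
def IsRibbonIso {V E V' E' : Type}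
    (G : Multigraph V E) (χ : RibbonStruct V E)
    (G' : Multigraph V' E') (χ' : RibbonStruct V' E')
    (φV : V ≃ V') (φE : E ≃ E') : Prop :=
  (∀ e, G'.ends (φE e) = (G.ends e).map φV) ∧
  ∀ v e, v ∈ G.ends e → φE (χ.next v e) = χ'.next (φV v) (φE e)


/-- The data of a candidate sandpile torsor algorithm: for every ribbon graph
(on `Fin` types) an operation of the sandpile group on edge sets
(only its values on plane graphs and spanning trees are relevant). -/
abbrev AlgData : Type :=
  ∀ (nV nE : ℕ) (G : Multigraph (Fin nV) (Fin nE)) (χ : RibbonStruct (Fin nV) (Fin nE)),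
    G.Pic0 → Finset (Fin nE) → Finset (Fin nE)

/-- A sandpile torsor algorithm on plane graphs: on every plane graph it gives
a free transitive action of `Pic⁰(G)` on spanning trees, compatibly with
ribbon graph isomorphisms. -/
def IsTorsorAlg (α : AlgData) : Prop :=
  ∀ (nV nE : ℕ) (G : Multigraph (Fin nV) (Fin nE)) (χ : RibbonStruct (Fin nV) (Fin nE)),
    G.IsPlane χ →
    (∀ S T, G.IsSpanningTree T → G.IsSpanningTree (α nV nE G χ S T)) ∧
    (∀ T, G.IsSpanningTree T → α nV nE G χ 0 T = T) ∧
    (∀ S S' T, G.IsSpanningTree T →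
      α nV nE G χ (S + S') T = α nV nE G χ S (α nV nE G χ S' T)) ∧
    (∀ S T, G.IsSpanningTree T → α nV nE G χ S T = T → S = 0) ∧
    (∀ T T', G.IsSpanningTree T → G.IsSpanningTree T' → ∃ S, α nV nE G χ S T = T') ∧
    (∀ (nV' nE' : ℕ) (G' : Multigraph (Fin nV') (Fin nE'))
        (χ' : RibbonStruct (Fin nV') (Fin nE')), G'.IsPlane χ' →
      ∀ (φV : Fin nV ≃ Fin nV') (φE : Fin nE ≃ Fin nE'),
        IsRibbonIso G χ G' χ' φV φE →
        ∀ (D : Fin nV → ℤ) (hD : D ∈ Div0 (Fin nV))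
          (hD' : (D ∘ φV.symm) ∈ Div0 (Fin nV')) (T : Finset (Fin nE)),
          G.IsSpanningTree T →
          α nV' nE' G' χ' (G'.picClass (D ∘ φV.symm) hD') (T.image φE) =
            (α nV nE G χ (G.picClass D hD) T).image φE)

/-- The reversed ribbon structure `χ̄`: the cyclic order at each vertex is
reversed, i.e. `next` is replaced by its inverse. -/
noncomputable def RibbonStruct.reverse {V E : Type} (χ : RibbonStruct V E) :
    RibbonStruct V E :=
  ⟨fun v a => @Function.invFun E E ⟨a⟩ (χ.next v) a⟩

/-- `ᾱ`, defined by `ᾱ_{(G,χ̄)}(S,T) = α_{(G,χ)}(S,T)`. -/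
noncomputable def revAlg (α : AlgData) : AlgData :=
  fun nV nE G χ S T => α nV nE G χ.reverse S T

/-- `α⁻¹`, defined by `α⁻¹_{(G,χ)}(-S,T) = α_{(G,χ)}(S,T)`. -/
def invAlg (α : AlgData) : AlgData :=
  fun nV nE G χ S T => α nV nE G χ (-S) T

/-- `ᾱ⁻¹`, defined by `ᾱ⁻¹_{(G,χ̄)}(-S,T) = α_{(G,χ)}(S,T)`. -/
noncomputable def revInvAlg (α : AlgData) : AlgData :=
  fun nV nE G χ S T => α nV nE G χ.reverse (-S) T

/-- Two algorithms are distinct if they differ on some plane graph, some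
sandpile element and some spanning tree. -/
def AlgNe (α β : AlgData) : Prop :=
  ∃ (nV nE : ℕ) (G : Multigraph (Fin nV) (Fin nE)) (χ : RibbonStruct (Fin nV) (Fin nE)),
    G.IsPlane χ ∧ ∃ S T, G.IsSpanningTree T ∧ α nV nE G χ S T ≠ β nV nE G χ S T

/-!
Reversing the cyclic orders keeps the ribbon axioms, ribbon isomorphisms and the number of
faces (a face of `χ̄` is a face of `χ` traversed backwards), so `ᾱ` is again a torsor algorithm;
`α⁻¹` is one because `S ↦ -S` is an automorphism of `Pic⁰(G)`, and `ᾱ⁻¹ = (α⁻¹)‾`.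

Any torsor algorithm `β` differs from `β⁻¹` wherever `Pic⁰(G)` has an element `S` with
`2S ≠ 0`, for instance on the triangle `C₃` and on the triple edge `E₃`, both with
`Pic⁰ ≅ ℤ/3`. On `C₃` every vertex has degree two, so `χ̄ = χ` and `β̄ = β` there; this
separates `{α, ᾱ}` from `{α⁻¹, ᾱ⁻¹}`. On `E₃` swapping the two vertices is a ribbon
isomorphism `(E₃, χ̄) ≅ (E₃, χ)` that negates every degree-zero divisor, so isomorphism
invariance forces `β̄ = β⁻¹` on `E₃`; this separates `α` from `ᾱ` and `α⁻¹` from `ᾱ⁻¹`.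
-/

namespace RibbonStruct

variable {V E : Type} (χ : RibbonStruct V E) {v : V}

theorem ext {ψ : RibbonStruct V E} (h : ∀ v e, χ.next v e = ψ.next v e) : χ = ψ := by
  cases χ
  cases ψ
  congr
  funext v e
  exact h v e

theorem reverse_next_next (hinj : Function.Injective (χ.next v)) (e : E) :
    χ.reverse.next v (χ.next v e) = e :=
  haveI : Nonempty E := ⟨e⟩
  Function.leftInverse_invFun hinj e

theorem next_reverse_next (hsurj : Function.Surjective (χ.next v)) (e : E) :
    χ.next v (χ.reverse.next v e) = e :=
  haveI : Nonempty E := ⟨e⟩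
  Function.rightInverse_invFun hsurj e

theorem reverse_next_eq_of_next_eq (hinj : Function.Injective (χ.next v)) {x e : E}
    (h : χ.next v x = e) : χ.reverse.next v e = x :=
  h ▸ χ.reverse_next_next hinj x

theorem reverse_next_bijective (hbij : Function.Bijective (χ.next v)) :
    Function.Bijective (χ.reverse.next v) :=
  Function.bijective_iff_has_inverse.mpr
    ⟨χ.next v, χ.next_reverse_next hbij.2, χ.reverse_next_next hbij.1⟩

theorem reverse_reverse (hbij : ∀ v, Function.Bijective (χ.next v)) : χ.reverse.reverse = χ :=
  ext _ fun v e => χ.reverse.reverse_next_eq_of_next_eq (χ.reverse_next_bijective (hbij v)).1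
    (χ.reverse_next_next (hbij v).1 e)

theorem reverse_eq_self_of_involutive (h : ∀ v, Function.Involutive (χ.next v)) :
    χ.reverse = χ :=
  ext _ fun v e => χ.reverse_next_eq_of_next_eq (h v).injective (h v e)

variable [Fintype V] [Fintype E] {G : Multigraph V E}

theorem mem_ends_reverse_next (hr : χ.IsRibbon G) {e : E} (he : v ∈ G.ends e) :
    v ∈ G.ends (χ.reverse.next v e) := by
  have hbij : Set.BijOn (χ.next v) {e | v ∈ G.ends e} {e | v ∈ G.ends e} :=
    ((Set.toFinite _).injOn_iff_bijOn_of_mapsTo fun x hx => hr.2.1 v x hx).mp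
      (hr.1 v).1.injOn
  obtain ⟨x, hx, rfl⟩ := hbij.surjOn he
  rwa [χ.reverse_next_next (hr.1 v).1]

theorem IsRibbon.reverse {χ : RibbonStruct V E} (hr : χ.IsRibbon G) : χ.reverse.IsRibbon G := by
  refine ⟨fun v => χ.reverse_next_bijective (hr.1 v),
    fun v e he => χ.mem_ends_reverse_next hr he, fun v e f he hf => ?_⟩
  obtain ⟨m, hm⟩ := hr.2.2 v f e hf he
  exact ⟨m, hm ▸ (Function.LeftInverse.iterate (χ.reverse_next_next (hr.1 v).1) m) f⟩

end RibbonStruct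

theorem IsRibbonIso.reverse {V E V' E' : Type} [Fintype V] [Fintype E] [Fintype V'] [Fintype E']
    {G : Multigraph V E} {χ : RibbonStruct V E} {G' : Multigraph V' E'}
    {χ' : RibbonStruct V' E'} {φV : V ≃ V'} {φE : E ≃ E'}
    (hr : χ.IsRibbon G) (hr' : χ'.IsRibbon G') (hiso : IsRibbonIso G χ G' χ' φV φE) :
    IsRibbonIso G χ.reverse G' χ'.reverse φV φE := by
  refine ⟨hiso.1, fun v e he => ?_⟩
  have h := hiso.2 v (χ.reverse.next v e) (χ.mem_ends_reverse_next hr he)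
  rw [χ.next_reverse_next (hr.1 v).2] at h
  exact (χ'.reverse_next_eq_of_next_eq (hr'.1 (φV v)).1 h.symm).symm

namespace Multigraph

variable {V E : Type}

instance [DecidableEq V] (G : Multigraph V E) (T : Finset E) : DecidableRel (G.AdjOn T) :=
  fun _ _ => inferInstanceAs (Decidable (∃ e ∈ T, _))

instance [Fintype V] [Fintype E] [DecidableEq V] (G : Multigraph V E) : Fintype G.Dart :=
  inferInstanceAs (Fintype {p : E × V // p.2 ∈ G.ends p.1})

instance [DecidableEq V] [DecidableEq E] (G : Multigraph V E) : DecidableEq G.Dart :=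
  inferInstanceAs (DecidableEq {p : E × V // p.2 ∈ G.ends p.1})

instance [DecidableEq V] [DecidableEq E] (G : Multigraph V E) (χ : RibbonStruct V E) :
    DecidableRel (G.FaceRel χ) :=
  fun _ _ => inferInstanceAs (Decidable (_ ∧ _))

section Faces

def Dart.symm {G : Multigraph V E} (d : G.Dart) : G.Dart :=
  ⟨(d.1.1, Sym2.Mem.other d.2), Sym2.other_mem d.2⟩

theorem Dart.symm_symm {G : Multigraph V E} (d : G.Dart) : d.symm.symm = d := by
  obtain ⟨⟨e, v⟩, h⟩ := d
  exact Subtype.ext (congrArg (Prod.mk e) (Sym2.other_invol h (Sym2.other_mem h)))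

variable (G : Multigraph V E) (χ : RibbonStruct V E)

theorem faceRel_reverse_symm [Fintype V] [Fintype E] (hr : χ.IsRibbon G) {a b : G.Dart}
    (h : G.FaceRel χ a b) : G.FaceRel χ.reverse b.symm a.symm := by
  obtain ⟨hnext, hends⟩ := h
  have hb : Sym2.Mem.other b.2 = a.1.2 :=
    Sym2.congr_right.mp ((Sym2.other_spec b.2).trans (hends.trans Sym2.eq_swap))
  constructor
  · change a.1.1 = χ.reverse.next (Sym2.Mem.other b.2) b.1.1
    rw [hb, χ.reverse_next_eq_of_next_eq (hr.1 _).1 hnext.symm]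
  · change G.ends a.1.1 = s(Sym2.Mem.other b.2, Sym2.Mem.other a.2)
    rw [hb, Sym2.other_spec]

theorem numFaces_reverse [Fintype V] [Fintype E] (hr : χ.IsRibbon G) :
    G.numFaces χ.reverse = G.numFaces χ := by
  have hrr : G.FaceRel χ.reverse.reverse = G.FaceRel χ := by rw [χ.reverse_reverse hr.1]
  refine Nat.card_congr
    ⟨Quot.lift (fun d => Quot.mk _ d.symm) fun _ _ h =>
      (Quot.sound (hrr ▸ G.faceRel_reverse_symm _ hr.reverse h)).symm,
    Quot.lift (fun d => Quot.mk _ d.symm) fun _ _ h =>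
      (Quot.sound (G.faceRel_reverse_symm χ hr h)).symm, ?_, ?_⟩ <;>
  exact Quot.ind fun d => congrArg (Quot.mk _) d.symm_symm

theorem numFaces_eq_of_faceLabel {k : ℕ} (c : G.Dart → Fin k)
    (hc : ∀ a b, G.FaceRel χ a b → c a = c b) (rep : Fin k → G.Dart) (hrep : ∀ i, c (rep i) = i)
    (hreach : ∀ d, Relation.ReflTransGen (G.FaceRel χ) (rep (c d)) d) : G.numFaces χ = k := by
  have hquot : ∀ {a d}, Relation.ReflTransGen (G.FaceRel χ) a d →
      Quot.mk (G.FaceRel χ) a = Quot.mk _ d := by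
    intro a d h
    induction h with
    | refl => rfl
    | tail _ hab ih => exact ih.trans (Quot.sound hab)
  rw [numFaces, ← Nat.card_fin k]
  exact Nat.card_congr
    ⟨Quot.lift c hc, fun i => Quot.mk _ (rep i), Quot.ind fun d => hquot (hreach d), hrep⟩

end Faces

theorem IsPlane.reverse [Fintype V] [Fintype E] [DecidableEq V] [DecidableEq E]
    {G : Multigraph V E} {χ : RibbonStruct V E} (h : G.IsPlane χ) : G.IsPlane χ.reverse :=
  ⟨h.1, h.2.1.reverse, by rw [G.numFaces_reverse χ h.2.1, h.2.2]⟩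

theorem isSpanningTree_of_star [Fintype V] (G : Multigraph V E) {T : Finset E} (r : V)
    (hstar : ∀ x, x = r ∨ G.AdjOn T r x) (hcard : T.card = Fintype.card V - 1) :
    G.IsSpanningTree T := by
  have to_root : ∀ x, G.ReachOn T x r := fun x =>
    (hstar x).elim (fun h => h ▸ .refl) fun ⟨e, he, h⟩ => .single ⟨e, he, h.trans Sym2.eq_swap⟩
  have from_root : ∀ x, G.ReachOn T r x := fun x => (hstar x).elim (fun h => h ▸ .refl) .single
  exact ⟨fun x y => (to_root x).trans (from_root y), hcard⟩

theorem IsSpanningTree.connected [Fintype V] {G : Multigraph V E} {T : Finset E}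
    (hT : G.IsSpanningTree T) : G.Connected := fun x y =>
  Relation.ReflTransGen.mono (fun _ _ ⟨e, _, h⟩ => ⟨e, h⟩) _ _ (hT.1 x y)

section Pic

variable [Fintype V] [Fintype E] [DecidableEq V] (G : Multigraph V E)

theorem picClass_neg {D : V → ℤ} (hD : D ∈ Div0 V) (hnD : -D ∈ Div0 V) :
    G.picClass (-D) hnD = -G.picClass D hD :=
  rfl

theorem notMem_lapSubgroup_of_not_dvd (w : V → ℤ) {n : ℤ}
    (hlap : ∀ v, n ∣ ∑ u, w u * G.lapRow v u) {x : V → ℤ} (hx : ¬ n ∣ ∑ u, w u * x u) :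
    x ∉ G.LapSubgroup := by
  intro hmem
  refine hx (AddSubgroup.closure_induction (p := fun x _ => n ∣ ∑ u, w u * x u) ?_ ?_ ?_ ?_ hmem)
  · rintro _ ⟨v, rfl⟩
    exact hlap v
  · simp
  · intro x y _ _ hx hy
    simpa only [Pi.add_apply, mul_add, sum_add_distrib] using dvd_add hx hy
  · intro x _ hx
    simpa only [Pi.neg_apply, mul_neg, sum_neg_distrib, dvd_neg] using hx

theorem picClass_add_self_ne_zero (w : V → ℤ) {n : ℤ}
    (hlap : ∀ v, n ∣ ∑ u, w u * G.lapRow v u) {D : V → ℤ} (hD : D ∈ Div0 V)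
    (hDD : ¬ n ∣ ∑ u, w u * (D u + D u)) : G.picClass D hD + G.picClass D hD ≠ 0 := fun h =>
  G.notMem_lapSubgroup_of_not_dvd w hlap hDD
    (AddSubgroup.mem_addSubgroupOf.mp ((QuotientAddGroup.eq_zero_iff _).mp h))

end Pic

end Multigraph

theorem revInvAlg_eq_revAlg_invAlg (α : AlgData) : revInvAlg α = revAlg (invAlg α) :=
  rfl

namespace IsTorsorAlg

variable {α : AlgData}

theorem inv (hα : IsTorsorAlg α) : IsTorsorAlg (invAlg α) := by
  intro nV nE G χ hpl
  obtain ⟨hmaps, hzero, hadd, hfree, htrans, hiso⟩ := hα nV nE G χ hpl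
  refine ⟨fun S => hmaps (-S), fun T hT => by simpa only [invAlg, neg_zero] using hzero T hT,
    fun S S' T hT => ?_, fun S T hT h => neg_eq_zero.mp (hfree (-S) T hT h),
    fun T T' hT hT' => ?_, ?_⟩
  · simp only [invAlg, neg_add, hadd _ _ _ hT]
  · obtain ⟨S, hS⟩ := htrans T T' hT hT'
    exact ⟨-S, by simpa only [invAlg, neg_neg] using hS⟩
  · intro nV' nE' G' χ' hpl' φV φE hφ D hD hD' T hT
    exact hiso nV' nE' G' χ' hpl' φV φE hφ (-D) (neg_mem hD) (neg_mem hD') T hT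

theorem rev (hα : IsTorsorAlg α) : IsTorsorAlg (revAlg α) := by
  intro nV nE G χ hpl
  obtain ⟨hmaps, hzero, hadd, hfree, htrans, hiso⟩ := hα nV nE G χ.reverse hpl.reverse
  refine ⟨hmaps, hzero, hadd, hfree, htrans, ?_⟩
  intro nV' nE' G' χ' hpl' φV φE hφ
  exact hiso nV' nE' G' χ'.reverse hpl'.reverse φV φE (hφ.reverse hpl.2.1 hpl'.2.1)

theorem apply_ne_apply_neg (hα : IsTorsorAlg α) {nV nE : ℕ}
    {G : Multigraph (Fin nV) (Fin nE)} {χ : RibbonStruct (Fin nV) (Fin nE)}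
    (hpl : G.IsPlane χ) {T : Finset (Fin nE)} (hT : G.IsSpanningTree T) {S : G.Pic0}
    (hS : S + S ≠ 0) : α nV nE G χ S T ≠ α nV nE G χ (-S) T := by
  obtain ⟨-, hzero, hadd, hfree, -, -⟩ := hα nV nE G χ hpl
  intro h
  refine hS (hfree _ _ hT ?_)
  rw [hadd S S T hT, h, ← hadd S (-S) T hT, add_neg_cancel, hzero T hT]

end IsTorsorAlg

def tripleEdge : Multigraph (Fin 2) (Fin 3) := ⟨fun _ => s(0, 1), by decide⟩

/-- Both vertices see the edges in the cyclic order `0, 1, 2`, one clockwise and the other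
counterclockwise, as in a planar drawing. -/
def tripleEdgeRibbon : RibbonStruct (Fin 2) (Fin 3) :=
  ⟨fun v e => if v = 0 then e + 1 else e - 1⟩

def triangle : Multigraph (Fin 3) (Fin 3) := ⟨fun e => s(e, e + 1), by decide⟩

def triangleRibbon : RibbonStruct (Fin 3) (Fin 3) :=
  ⟨fun v e => if e = v then v - 1 else if e = v - 1 then v else e⟩

/-- The faces of `(E₃, χ)` are the two-dart cycles `(e, 0) → (e + 1, 1) → (e, 0)`. -/
def tripleEdgeFace (d : tripleEdge.Dart) : Fin 3 := if d.1.2 = 0 then d.1.1 else d.1.1 - 1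

def tripleEdgeFaceRep (i : Fin 3) : tripleEdge.Dart := ⟨(i, 0), Sym2.mem_mk_left 0 1⟩

/-- The faces of `(C₃, χ)` are the darts `(e, e)` and the darts `(e, e + 1)`. -/
def triangleFace (d : triangle.Dart) : Fin 2 := if d.1.2 = d.1.1 then 0 else 1

def triangleFaceRep (i : Fin 2) : triangle.Dart := ⟨(0, i.castSucc), by revert i; decide⟩

theorem tripleEdge_isSpanningTree : tripleEdge.IsSpanningTree {0} :=
  tripleEdge.isSpanningTree_of_star 0 (by decide) rfl

theorem triangle_isSpanningTree : triangle.IsSpanningTree {0, 1} :=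
  triangle.isSpanningTree_of_star 1 (by decide) rfl

theorem tripleEdgeRibbon_isRibbon : tripleEdgeRibbon.IsRibbon tripleEdge := by
  refine ⟨by decide, by decide, fun v e f _ _ => ?_⟩
  have h : ∀ (v : Fin 2) (e f : Fin 3), ∃ m < 3, (tripleEdgeRibbon.next v)^[m] e = f := by decide
  obtain ⟨m, -, hm⟩ := h v e f
  exact ⟨m, hm⟩

theorem triangleRibbon_isRibbon : triangleRibbon.IsRibbon triangle := by
  refine ⟨by decide, by decide, fun v e f he hf => ?_⟩
  have h : ∀ (v e f : Fin 3), v ∈ triangle.ends e → v ∈ triangle.ends f →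
      ∃ m < 2, (triangleRibbon.next v)^[m] e = f := by decide
  obtain ⟨m, -, hm⟩ := h v e f he hf
  exact ⟨m, hm⟩

theorem tripleEdge_numFaces : tripleEdge.numFaces tripleEdgeRibbon = 3 := by
  have hstep : ∀ d, tripleEdgeFaceRep (tripleEdgeFace d) = d ∨
      tripleEdge.FaceRel tripleEdgeRibbon (tripleEdgeFaceRep (tripleEdgeFace d)) d := by
    decide
  refine tripleEdge.numFaces_eq_of_faceLabel _ tripleEdgeFace (by decide) tripleEdgeFaceRep
    (by decide) fun d => ?_
  rcases hstep d with h | h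
  · rw [h]
  · exact .single h

theorem triangle_numFaces : triangle.numFaces triangleRibbon = 2 := by
  have hstep : ∀ d, triangleFaceRep (triangleFace d) = d ∨
      triangle.FaceRel triangleRibbon (triangleFaceRep (triangleFace d)) d ∨
      ∃ d', triangle.FaceRel triangleRibbon (triangleFaceRep (triangleFace d)) d' ∧
        triangle.FaceRel triangleRibbon d' d := by
    decide
  refine triangle.numFaces_eq_of_faceLabel _ triangleFace (by decide) triangleFaceRep
    (by decide) fun d => ?_
  rcases hstep d with h | h | ⟨d', h₁, h₂⟩
  · rw [h]
  · exact .single h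
  · exact .tail (.single h₁) h₂

theorem tripleEdge_isPlane : tripleEdge.IsPlane tripleEdgeRibbon :=
  ⟨tripleEdge_isSpanningTree.connected, tripleEdgeRibbon_isRibbon,
    by simp only [tripleEdge_numFaces, Fintype.card_fin]⟩

theorem triangle_isPlane : triangle.IsPlane triangleRibbon :=
  ⟨triangle_isSpanningTree.connected, triangleRibbon_isRibbon,
    by simp only [triangle_numFaces, Fintype.card_fin]⟩

theorem triangleRibbon_reverse : triangleRibbon.reverse = triangleRibbon := by
  have h : ∀ v e, triangleRibbon.next v (triangleRibbon.next v e) = e := by decide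
  exact triangleRibbon.reverse_eq_self_of_involutive h

theorem tripleEdge_isRibbonIso_swap :
    IsRibbonIso tripleEdge tripleEdgeRibbon.reverse tripleEdge tripleEdgeRibbon
      (Equiv.swap 0 1) (Equiv.refl _) := by
  have h : ∀ v e, tripleEdgeRibbon.next v (tripleEdgeRibbon.next (Equiv.swap 0 1 v) e) = e := by
    decide
  exact ⟨by decide, fun v e _ =>
    tripleEdgeRibbon.reverse_next_eq_of_next_eq (tripleEdgeRibbon_isRibbon.1 v).1 (h v e)⟩

theorem tripleEdge_exists_add_self_ne_zero : ∃ S : tripleEdge.Pic0, S + S ≠ 0 :=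
  ⟨_, tripleEdge.picClass_add_self_ne_zero ![1, 0] (n := 3) (by decide)
    (D := chipDiv 0 1) (show ∑ v, chipDiv (0 : Fin 2) 1 v = 0 by decide) (by decide)⟩

theorem triangle_exists_add_self_ne_zero : ∃ S : triangle.Pic0, S + S ≠ 0 :=
  ⟨_, triangle.picClass_add_self_ne_zero ![1, -1, 0] (n := 3) (by decide)
    (D := chipDiv 0 1) (show ∑ v, chipDiv (0 : Fin 3) 1 v = 0 by decide) (by decide)⟩

theorem revAlg_triangle (β : AlgData) :
    revAlg β 3 3 triangle triangleRibbon = β 3 3 triangle triangleRibbon :=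
  congrArg (β 3 3 triangle) triangleRibbon_reverse

namespace IsTorsorAlg

variable {α : AlgData}

theorem revAlg_tripleEdge (hα : IsTorsorAlg α) (S : tripleEdge.Pic0) {T : Finset (Fin 3)}
    (hT : tripleEdge.IsSpanningTree T) :
    revAlg α 2 3 tripleEdge tripleEdgeRibbon S T =
      invAlg α 2 3 tripleEdge tripleEdgeRibbon S T := by
  obtain ⟨-, -, -, -, -, hiso⟩ :=
    hα 2 3 tripleEdge tripleEdgeRibbon.reverse tripleEdge_isPlane.reverse
  induction S using QuotientAddGroup.induction_on with
  | H D =>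
    obtain ⟨D, hD⟩ := D
    have hswap : D ∘ (Equiv.swap (0 : Fin 2) 1).symm = -D := by
      have hsum : D 0 + D 1 = 0 := (Fin.sum_univ_two D).symm.trans hD
      funext v
      fin_cases v
      · change D 1 = -D 0
        omega
      · change D 0 = -D 1
        omega
    have hneg : tripleEdge.picClass (D ∘ (Equiv.swap (0 : Fin 2) 1).symm) (hswap ▸ neg_mem hD) =
        -tripleEdge.picClass D hD := by
      rw [← tripleEdge.picClass_neg hD (neg_mem hD)]
      congr 1
    have h := hiso 2 3 tripleEdge tripleEdgeRibbon tripleEdge_isPlane _ _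
      tripleEdge_isRibbonIso_swap D hD (hswap ▸ neg_mem hD) T hT
    rw [hneg] at h
    simp only [Equiv.coe_refl, image_id] at h
    exact h.symm

theorem algNe_revAlg (hα : IsTorsorAlg α) : AlgNe α (revAlg α) := by
  obtain ⟨S, hS⟩ := tripleEdge_exists_add_self_ne_zero
  refine ⟨2, 3, tripleEdge, tripleEdgeRibbon, tripleEdge_isPlane, S, {0},
    tripleEdge_isSpanningTree, ?_⟩
  rw [hα.revAlg_tripleEdge S tripleEdge_isSpanningTree]
  exact hα.apply_ne_apply_neg tripleEdge_isPlane tripleEdge_isSpanningTree hS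

theorem algNe_of_triangle (hα : IsTorsorAlg α) {β γ : AlgData}
    (hβ : β 3 3 triangle triangleRibbon = α 3 3 triangle triangleRibbon)
    (hγ : γ 3 3 triangle triangleRibbon = invAlg α 3 3 triangle triangleRibbon) : AlgNe β γ := by
  obtain ⟨S, hS⟩ := triangle_exists_add_self_ne_zero
  refine ⟨3, 3, triangle, triangleRibbon, triangle_isPlane, S, {0, 1},
    triangle_isSpanningTree, ?_⟩
  rw [hβ, hγ]
  exact hα.apply_ne_apply_neg triangle_isPlane triangle_isSpanningTree hS

end IsTorsorAlg

/-- if `α` is a sandpile torsor algorithm, then so are `ᾱ`,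
`α⁻¹` and `ᾱ⁻¹`, and the four algorithms are pairwise distinct. -/
theorem four_torsor_algorithms (α : AlgData) (hα : IsTorsorAlg α) :
    IsTorsorAlg (revAlg α) ∧ IsTorsorAlg (invAlg α) ∧ IsTorsorAlg (revInvAlg α) ∧
    AlgNe α (revAlg α) ∧ AlgNe α (invAlg α) ∧ AlgNe α (revInvAlg α) ∧
    AlgNe (revAlg α) (invAlg α) ∧ AlgNe (revAlg α) (revInvAlg α) ∧
    AlgNe (invAlg α) (revInvAlg α) := by
  rw [revInvAlg_eq_revAlg_invAlg]
  exact ⟨hα.rev, hα.inv, hα.inv.rev, hα.algNe_revAlg,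
    hα.algNe_of_triangle rfl rfl,
    hα.algNe_of_triangle rfl (revAlg_triangle _),
    hα.algNe_of_triangle (revAlg_triangle _) rfl,
    hα.algNe_of_triangle (revAlg_triangle _) (revAlg_triangle _),
    hα.inv.algNe_revAlg⟩

end
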